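/- Let N be a (1/2)-net of the unit sphere S^{d−1} and let Δ_t ∈ S^d be symmetric of rank at most 2r and, for each w ∈ N, let Δ_{t,w} ∈ S^d be symmetric of rank at most 2r. Suppose A: S^d → R^m satisfies the RIP of order 2r+2 with constant δ ≤ 1 and that for all w ∈ N, |⟨ww^T, (A*A)(P_{w,⊥}(Δ_{t,w}))⟩| ≤ 4√(d/m) ‖A(P_{w,⊥}(Δ_{t,w}))‖_2, where P_{w,⊥}(Z) = Z − ⟨ww^T,Z⟩ww^T. Then ‖(A*A − I)(Δ_t)‖ ≤ (16√(2rd/m) + 2δ)‖Δ_t‖ + 4(δ + 4√(d/m)) sup_{w∈N} ‖Δ_t − Δ_{t,w}‖_F. -/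

import Mathlib

/-!
Let `M = (𝒜*𝒜 - 1) Δt`, a symmetric matrix. A `1/2`-net sees its spectral norm up to a factor
`2`: an eigenvector of `M` lies within `1/2` of some net point `w`, so `⟪w, v⟫ ≥ 7/8` and the
quadratic form `wᵀ M w` retains most of the corresponding eigenvalue.

For a net point `w` with `W = w wᵀ`, split `Δt = P + G + ⟪W, Δt⟫ W` with `P = P_{w,⊥}(Δ_{t,w})`
and `G = P_{w,⊥}(Δt - Δ_{t,w})`. Then `⟪W, M⟫` is the sum of
* `⟪W, 𝒜*𝒜 P⟫`, bounded by hypothesis and the RIP bound `‖𝒜 P‖ ≤ √2 ‖P‖_F`;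
* `⟪W, Δt⟫ (‖𝒜 W‖² - 1)`, at most `δ ‖Δt‖` by the RIP;
* `⟪𝒜 W, 𝒜 G⟫ - ⟪W, G⟫`, at most `2 δ ‖Δt - Δ_{t,w}‖_F`: by polarization the RIP of order
  `2r + 2` controls this cross term for `G` of rank `≤ 2r + 1`, and `G` (of rank `≤ 4r + 1`)
  splits along its eigenvectors into two such pieces.
Finally `‖Δt‖_F ≤ √(2r) ‖Δt‖` because `Δt` has rank at most `2r`.
-/

open scoped BigOperators
open Matrix

noncomputable def frobNorm {d₁ d₂ : ℕ} (A : Matrix (Fin d₁) (Fin d₂) ℝ) : ℝ :=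
  Real.sqrt (∑ i, ∑ j, A i j ^ 2)

noncomputable def vecNorm {m : ℕ} (y : Fin m → ℝ) : ℝ :=
  Real.sqrt (∑ i, y i ^ 2)

noncomputable def specNorm {d₁ d₂ : ℕ} (A : Matrix (Fin d₁) (Fin d₂) ℝ) : ℝ :=
  ‖LinearMap.toContinuousLinearMap (Matrix.toEuclideanLin A)‖

noncomputable def tinner {d : ℕ} (A B : Matrix (Fin d) (Fin d) ℝ) : ℝ :=
  (A * Bᵀ).trace

noncomputable def sigmaMin {d₁ d₂ : ℕ} (A : Matrix (Fin d₁) (Fin d₂) ℝ) : ℝ :=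
  sInf {s : ℝ | 0 < s ∧ ∃ i, s ^ 2 = (Matrix.isHermitian_conjTranspose_mul_self A).eigenvalues i}

noncomputable def projPerp {d : ℕ} (w : Fin d → ℝ) (Z : Matrix (Fin d) (Fin d) ℝ) :
    Matrix (Fin d) (Fin d) ℝ :=
  Z - tinner (Matrix.vecMulVec w w) Z • Matrix.vecMulVec w w

open scoped RealInnerProductSpace

lemma sum_sq_eq_dotProduct_self {n : Type*} [Fintype n] (v : n → ℝ) : ∑ i, v i ^ 2 = v ⬝ᵥ v := by
  simp only [dotProduct, sq]

lemma vecNorm_nonneg {m : ℕ} (y : Fin m → ℝ) : 0 ≤ vecNorm y :=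
  Real.sqrt_nonneg _

lemma vecNorm_sq {m : ℕ} (y : Fin m → ℝ) : vecNorm y ^ 2 = y ⬝ᵥ y := by
  rw [vecNorm, Real.sq_sqrt (by positivity), sum_sq_eq_dotProduct_self]

section Frobenius

variable {d : ℕ}

def frobFlat : Matrix (Fin d) (Fin d) ℝ →ₗ[ℝ] EuclideanSpace ℝ (Fin d × Fin d) where
  toFun A := WithLp.toLp 2 fun p => A p.1 p.2
  map_add' _ _ := rfl
  map_smul' _ _ := rfl

@[simp]
lemma frobFlat_apply (A : Matrix (Fin d) (Fin d) ℝ) (p : Fin d × Fin d) :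
    frobFlat A p = A p.1 p.2 :=
  rfl

lemma tinner_eq_inner (A B : Matrix (Fin d) (Fin d) ℝ) :
    tinner A B = ⟪frobFlat A, frobFlat B⟫ := by
  simp [tinner, Matrix.trace, Matrix.mul_apply, PiLp.inner_apply, Fintype.sum_prod_type, mul_comm]

lemma frobNorm_eq_norm (A : Matrix (Fin d) (Fin d) ℝ) : frobNorm A = ‖frobFlat A‖ := by
  simp [frobNorm, EuclideanSpace.norm_eq, Fintype.sum_prod_type]

lemma frobNorm_nonneg (A : Matrix (Fin d) (Fin d) ℝ) : 0 ≤ frobNorm A :=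
  Real.sqrt_nonneg _

lemma specNorm_nonneg (A : Matrix (Fin d) (Fin d) ℝ) : 0 ≤ specNorm A :=
  norm_nonneg _

lemma tinner_comm (A B : Matrix (Fin d) (Fin d) ℝ) : tinner A B = tinner B A := by
  simp only [tinner_eq_inner, real_inner_comm]

lemma tinner_add_right (A B C : Matrix (Fin d) (Fin d) ℝ) :
    tinner A (B + C) = tinner A B + tinner A C := by
  simp only [tinner_eq_inner, map_add, inner_add_right]

lemma tinner_sub_right (A B C : Matrix (Fin d) (Fin d) ℝ) :
    tinner A (B - C) = tinner A B - tinner A C := by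
  simp only [tinner_eq_inner, map_sub, inner_sub_right]

lemma tinner_sub_left (A B C : Matrix (Fin d) (Fin d) ℝ) :
    tinner (A - B) C = tinner A C - tinner B C := by
  simp only [tinner_eq_inner, map_sub, inner_sub_left]

lemma tinner_smul_right (A B : Matrix (Fin d) (Fin d) ℝ) (c : ℝ) :
    tinner A (c • B) = c * tinner A B := by
  simp only [tinner_eq_inner, map_smul, real_inner_smul_right]

lemma tinner_add_left (A B C : Matrix (Fin d) (Fin d) ℝ) :
    tinner (A + B) C = tinner A C + tinner B C := by
  simp only [tinner_eq_inner, map_add, inner_add_left]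

lemma tinner_smul_left (A B : Matrix (Fin d) (Fin d) ℝ) (c : ℝ) :
    tinner (c • A) B = c * tinner A B := by
  simp only [tinner_eq_inner, map_smul, real_inner_smul_left]

lemma tinner_sum_right {ι : Type*} (s : Finset ι) (A : Matrix (Fin d) (Fin d) ℝ)
    (f : ι → Matrix (Fin d) (Fin d) ℝ) : tinner A (∑ i ∈ s, f i) = ∑ i ∈ s, tinner A (f i) := by
  simp only [tinner_eq_inner, map_sum, inner_sum]

lemma tinner_self (A : Matrix (Fin d) (Fin d) ℝ) : tinner A A = frobNorm A ^ 2 := by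
  rw [tinner_eq_inner, frobNorm_eq_norm, real_inner_self_eq_norm_sq]

lemma tinner_vecMulVec (a b c e : Fin d → ℝ) :
    tinner (vecMulVec a b) (vecMulVec c e) = (a ⬝ᵥ c) * (b ⬝ᵥ e) := by
  simp only [tinner_eq_inner, PiLp.inner_apply, frobFlat_apply, vecMulVec_apply, dotProduct,
    Fintype.sum_prod_type, Finset.sum_mul_sum, RCLike.inner_apply, conj_trivial]
  exact Finset.sum_congr rfl fun i _ => Finset.sum_congr rfl fun j _ => by ring

lemma frobNorm_sub_le (A B : Matrix (Fin d) (Fin d) ℝ) :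
    frobNorm (A - B) ≤ frobNorm A + frobNorm B := by
  simpa only [frobNorm_eq_norm, map_sub] using norm_sub_le _ _

lemma frobNorm_vecMulVec_self {w : Fin d → ℝ} (hw : ∑ i, w i ^ 2 = 1) :
    frobNorm (vecMulVec w w) = 1 := by
  have h := tinner_self (vecMulVec w w)
  rw [tinner_vecMulVec, ← sum_sq_eq_dotProduct_self, hw, one_mul, eq_comm,
    pow_eq_one_iff_of_nonneg (frobNorm_nonneg _) two_ne_zero] at h
  exact h

lemma frobNorm_eq_zero {A : Matrix (Fin d) (Fin d) ℝ} : frobNorm A = 0 ↔ A = 0 := by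
  rw [frobNorm_eq_norm, norm_eq_zero]
  refine ⟨fun h => ?_, fun h => by rw [h, map_zero]⟩
  ext i j
  simpa using congrArg (fun x : EuclideanSpace ℝ (Fin d × Fin d) => x (i, j)) h

end Frobenius

namespace Matrix

lemma isSymm_vecMulVec_self {n α : Type*} [CommMagma α] (v : n → α) :
    (vecMulVec v v).IsSymm :=
  IsSymm.ext fun i j => by simp only [vecMulVec_apply, mul_comm]

variable {m n ι K : Type*} [Fintype n] [Field K]

lemma rank_add_le (A B : Matrix m n K) : (A + B).rank ≤ A.rank + B.rank := by
  refine (Submodule.finrank_mono ?_).trans (Submodule.finrank_add_le_finrank_add_finrank _ _)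
  rintro _ ⟨x, rfl⟩
  exact Submodule.mem_sup.2 ⟨_, ⟨x, rfl⟩, _, ⟨x, rfl⟩, (add_mulVec A B x).symm⟩

lemma rank_smul_le (c : K) (A : Matrix m n K) : (c • A).rank ≤ A.rank := by
  refine Submodule.finrank_mono ?_
  rintro _ ⟨x, rfl⟩
  exact ⟨c • x, by simp⟩

lemma rank_sub_le (A B : Matrix m n K) : (A - B).rank ≤ A.rank + B.rank := by
  rw [sub_eq_add_neg, ← neg_one_smul K B]
  exact (rank_add_le _ _).trans (by grw [rank_smul_le])

lemma rank_sum_smul_vecMulVec_le (s : Finset ι) (μ : ι → K) (u : ι → m → K) (v : ι → n → K) :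
    (∑ i ∈ s, μ i • vecMulVec (u i) (v i)).rank ≤ s.card := by
  classical
  induction s using Finset.induction with
  | empty => simp
  | insert i s hi ih =>
    rw [Finset.sum_insert hi, Finset.card_insert_of_notMem hi, add_comm s.card]
    exact (rank_add_le _ _).trans
      (add_le_add ((rank_smul_le _ _).trans (rank_vecMulVec_le _ _)) ih)

end Matrix

lemma EuclideanSpace.ofLp_dotProduct_ofLp {n : Type*} [Fintype n] (x y : EuclideanSpace ℝ n) :
    x.ofLp ⬝ᵥ y.ofLp = ⟪x, y⟫ := by
  simp [EuclideanSpace.inner_eq_star_dotProduct, dotProduct_comm]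

lemma OrthonormalBasis.sum_sq_dotProduct {ι n : Type*} [Fintype ι] [Fintype n]
    (b : OrthonormalBasis ι ℝ (EuclideanSpace ℝ n)) (w : n → ℝ) :
    ∑ i, (w ⬝ᵥ ⇑(b i)) ^ 2 = ∑ a, w a ^ 2 := by
  have := b.sum_sq_norm_inner_right (WithLp.toLp 2 w)
  simp_rw [Real.norm_eq_abs, sq_abs, EuclideanSpace.norm_sq_eq, Real.norm_eq_abs, sq_abs] at this
  simpa [EuclideanSpace.inner_eq_star_dotProduct] using this

namespace Matrix.IsHermitian

variable {n : Type*} [Fintype n] [DecidableEq n] {A : Matrix n n ℝ} (hA : A.IsHermitian)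

lemma eq_sum_eigenvalues_smul_vecMulVec :
    A = ∑ i, hA.eigenvalues i • vecMulVec ⇑(hA.eigenvectorBasis i) ⇑(hA.eigenvectorBasis i) := by
  conv_lhs => rw [hA.spectral_theorem]
  ext a c
  simp [mul_apply, sum_apply, vecMulVec_apply, diagonal, mul_comm, mul_assoc]

lemma exists_eq_sum_card_eq_rank :
    ∃ S : Finset n, S.card = A.rank ∧ A = ∑ i ∈ S,
      hA.eigenvalues i • vecMulVec ⇑(hA.eigenvectorBasis i) ⇑(hA.eigenvectorBasis i) := by
  refine ⟨Finset.univ.filter fun i => hA.eigenvalues i ≠ 0, ?_, ?_⟩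
  · rw [hA.rank_eq_card_non_zero_eigs, Fintype.card_subtype]
  · rw [Finset.sum_filter_of_ne fun i _ h hi => by simp [hi] at h]
    exact hA.eq_sum_eigenvalues_smul_vecMulVec

end Matrix.IsHermitian

section Spectral

variable {d : ℕ}

lemma Orthonormal.frobFlat_vecMulVec {ι : Type*} {v : ι → EuclideanSpace ℝ (Fin d)}
    (hv : Orthonormal ℝ v) : Orthonormal ℝ fun i => frobFlat (vecMulVec ⇑(v i) ⇑(v i)) := by
  classical
  rw [orthonormal_iff_ite] at hv ⊢
  intro i j
  rw [← tinner_eq_inner, tinner_vecMulVec, EuclideanSpace.ofLp_dotProduct_ofLp, hv]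
  split_ifs <;> simp

lemma frobNorm_sum_smul_vecMulVec_sq {ι : Type*} {v : ι → EuclideanSpace ℝ (Fin d)}
    (hv : Orthonormal ℝ v) (μ : ι → ℝ) (s : Finset ι) :
    frobNorm (∑ i ∈ s, μ i • vecMulVec ⇑(v i) ⇑(v i)) ^ 2 = ∑ i ∈ s, μ i ^ 2 := by
  rw [← tinner_self, tinner_eq_inner, map_sum]
  simp_rw [map_smul, hv.frobFlat_vecMulVec.inner_sum, conj_trivial, sq]

open scoped Matrix.Norms.L2Operator in
lemma specNorm_eq_norm_eigenvalues {A : Matrix (Fin d) (Fin d) ℝ} (hA : A.IsHermitian) :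
    specNorm A = ‖hA.eigenvalues‖ := by
  change ‖A‖ = _
  conv_lhs => rw [hA.spectral_theorem]
  rw [Unitary.conjStarAlgAut_apply, ← Unitary.coe_star, CStarRing.norm_mul_coe_unitary,
    CStarRing.norm_coe_unitary_mul, l2_opNorm_diagonal]
  rfl

lemma abs_eigenvalues_le_specNorm {A : Matrix (Fin d) (Fin d) ℝ} (hA : A.IsHermitian) (i : Fin d) :
    |hA.eigenvalues i| ≤ specNorm A := by
  rw [specNorm_eq_norm_eigenvalues hA, ← Real.norm_eq_abs]
  exact norm_le_pi_norm _ i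

lemma frobNorm_le_sqrt_mul_specNorm {A : Matrix (Fin d) (Fin d) ℝ} (hA : A.IsSymm) {k : ℕ}
    (hk : A.rank ≤ k) : frobNorm A ≤ √k * specNorm A := by
  have hH : A.IsHermitian := isHermitian_iff_isSymm.mpr hA
  obtain ⟨S, hS, hAS⟩ := hH.exists_eq_sum_card_eq_rank
  refine le_of_pow_le_pow_left₀ two_ne_zero (mul_nonneg (Real.sqrt_nonneg _) (specNorm_nonneg A)) ?_
  calc frobNorm A ^ 2 = ∑ i ∈ S, hH.eigenvalues i ^ 2 := by
        conv_lhs => rw [hAS]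
        exact frobNorm_sum_smul_vecMulVec_sq hH.eigenvectorBasis.orthonormal _ _
    _ ≤ ∑ i ∈ S, specNorm A ^ 2 := Finset.sum_le_sum fun i _ => by
        rw [← sq_abs]
        gcongr
        exact abs_eigenvalues_le_specNorm hH i
    _ ≤ (√k * specNorm A) ^ 2 := by
        rw [Finset.sum_const, nsmul_eq_mul, hS, mul_pow, Real.sq_sqrt (Nat.cast_nonneg _)]
        gcongr

lemma exists_eq_add_of_rank_le_add {G : Matrix (Fin d) (Fin d) ℝ} (hG : G.IsSymm) {k l : ℕ}
    (hr : G.rank ≤ k + l) :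
    ∃ G₁ G₂ : Matrix (Fin d) (Fin d) ℝ, G = G₁ + G₂ ∧ G₁.IsSymm ∧ G₂.IsSymm ∧
      G₁.rank ≤ k ∧ G₂.rank ≤ l ∧ frobNorm G₁ ≤ frobNorm G ∧ frobNorm G₂ ≤ frobNorm G := by
  have hH : G.IsHermitian := isHermitian_iff_isSymm.mpr hG
  obtain ⟨S, hS, hGS⟩ := hH.exists_eq_sum_card_eq_rank
  obtain ⟨S₁, hS₁S, hS₁⟩ := Finset.exists_subset_card_eq (min_le_right k S.card)
  set part : Finset (Fin d) → Matrix (Fin d) (Fin d) ℝ := fun s =>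
    ∑ i ∈ s, hH.eigenvalues i • vecMulVec ⇑(hH.eigenvectorBasis i) ⇑(hH.eigenvectorBasis i)
  have hsymm (s : Finset (Fin d)) : (part s).IsSymm := by
    simp [part, IsSymm, transpose_sum, (isSymm_vecMulVec_self _).eq]
  have hfrob (s : Finset (Fin d)) (hs : s ⊆ S) : frobNorm (part s) ≤ frobNorm G := by
    rw [hGS, ← sq_le_sq₀ (frobNorm_nonneg _) (frobNorm_nonneg _),
      frobNorm_sum_smul_vecMulVec_sq hH.eigenvectorBasis.orthonormal,
      frobNorm_sum_smul_vecMulVec_sq hH.eigenvectorBasis.orthonormal]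
    exact Finset.sum_le_sum_of_subset_of_nonneg hs fun _ _ _ => sq_nonneg _
  refine ⟨part S₁, part (S \ S₁), ?_, hsymm _, hsymm _, ?_, ?_, hfrob _ hS₁S,
    hfrob _ Finset.sdiff_subset⟩
  · rw [hGS, add_comm]
    exact (Finset.sum_sdiff hS₁S).symm
  · exact (rank_sum_smul_vecMulVec_le _ _ _ _).trans (hS₁ ▸ min_le_left _ _)
  · refine (rank_sum_smul_vecMulVec_le _ _ _ _).trans ?_
    rw [Finset.card_sdiff_of_subset hS₁S]
    omega

lemma tinner_vecMulVec_eq_sum_eigenvalues {A : Matrix (Fin d) (Fin d) ℝ} (hA : A.IsHermitian)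
    (w : Fin d → ℝ) :
    tinner (vecMulVec w w) A = ∑ i, hA.eigenvalues i * (w ⬝ᵥ ⇑(hA.eigenvectorBasis i)) ^ 2 := by
  conv_lhs => rw [hA.eq_sum_eigenvalues_smul_vecMulVec]
  simp only [tinner_sum_right, tinner_smul_right, tinner_vecMulVec, sq]

lemma abs_tinner_vecMulVec_le_specNorm {A : Matrix (Fin d) (Fin d) ℝ} (hA : A.IsSymm)
    {w : Fin d → ℝ} (hw : ∑ i, w i ^ 2 = 1) : |tinner (vecMulVec w w) A| ≤ specNorm A := by
  have hH : A.IsHermitian := isHermitian_iff_isSymm.mpr hA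
  rw [tinner_vecMulVec_eq_sum_eigenvalues hH]
  calc |∑ i, hH.eigenvalues i * (w ⬝ᵥ ⇑(hH.eigenvectorBasis i)) ^ 2|
      ≤ ∑ i, |hH.eigenvalues i| * (w ⬝ᵥ ⇑(hH.eigenvectorBasis i)) ^ 2 := by
        refine (Finset.abs_sum_le_sum_abs _ _).trans_eq ?_
        simp only [abs_mul, abs_sq]
    _ ≤ ∑ i, specNorm A * (w ⬝ᵥ ⇑(hH.eigenvectorBasis i)) ^ 2 := by
        gcongr with i
        exact abs_eigenvalues_le_specNorm hH i
    _ = specNorm A := by rw [← Finset.mul_sum, hH.eigenvectorBasis.sum_sq_dotProduct, hw, mul_one]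

lemma abs_eigenvalues_mul_sq_le {A : Matrix (Fin d) (Fin d) ℝ} (hA : A.IsHermitian)
    {w : Fin d → ℝ} (hw : ∑ i, w i ^ 2 = 1) (i : Fin d) :
    |hA.eigenvalues i| * (w ⬝ᵥ ⇑(hA.eigenvectorBasis i)) ^ 2 ≤
      |tinner (vecMulVec w w) A| + specNorm A * (1 - (w ⬝ᵥ ⇑(hA.eigenvectorBasis i)) ^ 2) := by
  set c : Fin d → ℝ := fun j => (w ⬝ᵥ ⇑(hA.eigenvectorBasis j)) ^ 2
  set s := specNorm A
  have hc : ∑ j, c j = 1 := (hA.eigenvectorBasis.sum_sq_dotProduct w).trans hw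
  have hq := tinner_vecMulVec_eq_sum_eigenvalues hA w
  have hbound (j : Fin d) := abs_le.mp (abs_eigenvalues_le_specNorm hA j)
  -- for `σ = ±1` the weights `s + σ λⱼ` are nonnegative, so one term is at most the whole sum
  have hterm (σ : ℝ) (hσ : σ = 1 ∨ σ = -1) :
      (s + σ * hA.eigenvalues i) * c i ≤ s + σ * tinner (vecMulVec w w) A :=
    calc (s + σ * hA.eigenvalues i) * c i ≤ ∑ j, (s + σ * hA.eigenvalues j) * c j :=
          Finset.single_le_sum (f := fun j => (s + σ * hA.eigenvalues j) * c j)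
            (fun j _ => mul_nonneg (by rcases hσ with rfl | rfl <;> linarith [hbound j])
              (sq_nonneg _)) (Finset.mem_univ i)
      _ = s + σ * tinner (vecMulVec w w) A := by
          simp only [add_mul, mul_assoc, Finset.sum_add_distrib, ← Finset.mul_sum, hc, hq, c]
          ring
  have hup := hterm 1 (Or.inl rfl)
  have hlo := hterm (-1) (Or.inr rfl)
  cases abs_cases (hA.eigenvalues i) <;> cases abs_cases (tinner (vecMulVec w w) A) <;> nlinarith

theorem specNorm_le_two_mul_of_net {M : Matrix (Fin d) (Fin d) ℝ} (hM : M.IsSymm)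
    {Net : Finset (Fin d → ℝ)} (hunit : ∀ w ∈ Net, ∑ i, w i ^ 2 = 1)
    (hnet : ∀ x : Fin d → ℝ, ∑ i, x i ^ 2 = 1 → ∃ w ∈ Net, vecNorm (x - w) ≤ 1 / 2)
    {K : ℝ} (hK : 0 ≤ K) (hMK : ∀ w ∈ Net, |tinner (vecMulVec w w) M| ≤ K) :
    specNorm M ≤ 2 * K := by
  have hH : M.IsHermitian := isHermitian_iff_isSymm.mpr hM
  have hs := specNorm_nonneg M
  -- the eigenvector `v` is within `1/2` of a net point `w`, hence `⟪w, v⟫² ≥ 49/64`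
  have key (i : Fin d) : 49 * |hH.eigenvalues i| ≤ 64 * K + 15 * specNorm M := by
    set v : Fin d → ℝ := ⇑(hH.eigenvectorBasis i)
    have hv : v ⬝ᵥ v = 1 := by
      rw [EuclideanSpace.ofLp_dotProduct_ofLp, real_inner_self_eq_norm_sq,
        hH.eigenvectorBasis.orthonormal.1 i, one_pow]
    obtain ⟨w, hwN, hvw⟩ := hnet v (by rw [sum_sq_eq_dotProduct_self, hv])
    have hw := hunit w hwN
    rw [sum_sq_eq_dotProduct_self] at hw
    have hα : 7 / 8 ≤ w ⬝ᵥ v := by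
      have h := pow_le_pow_left₀ (vecNorm_nonneg _) hvw 2
      rw [vecNorm_sq, sub_dotProduct, dotProduct_sub, dotProduct_sub, hv, hw,
        dotProduct_comm v w] at h
      linarith
    have hα2 : 49 / 64 ≤ (w ⬝ᵥ v) ^ 2 := by nlinarith
    have := abs_eigenvalues_mul_sq_le hH (hunit w hwN) i
    nlinarith [hMK w hwN, mul_nonneg (add_nonneg (abs_nonneg (hH.eigenvalues i)) hs)
      (sub_nonneg.2 hα2)]
  have hnorm : ‖hH.eigenvalues‖ ≤ (64 * K + 15 * specNorm M) / 49 :=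
    (pi_norm_le_iff_of_nonneg (by positivity)).2 fun i => by
      rw [Real.norm_eq_abs]
      linarith [key i]
  rw [← specNorm_eq_norm_eigenvalues hH] at hnorm
  linarith

end Spectral

section ProjPerp

variable {d : ℕ} (w : Fin d → ℝ)

lemma projPerp_add (X Y : Matrix (Fin d) (Fin d) ℝ) :
    projPerp w (X + Y) = projPerp w X + projPerp w Y := by
  simp only [projPerp, tinner_add_right, add_smul]
  abel

lemma projPerp_add_tinner_smul (Z : Matrix (Fin d) (Fin d) ℝ) :
    projPerp w Z + tinner (vecMulVec w w) Z • vecMulVec w w = Z :=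
  sub_add_cancel _ _

lemma Matrix.IsSymm.projPerp {Z : Matrix (Fin d) (Fin d) ℝ} (hZ : Z.IsSymm) :
    (projPerp w Z).IsSymm :=
  hZ.sub ((isSymm_vecMulVec_self w).smul _)

lemma rank_projPerp_le (Z : Matrix (Fin d) (Fin d) ℝ) : (projPerp w Z).rank ≤ Z.rank + 1 := by
  have h1 := rank_sub_le Z (tinner (vecMulVec w w) Z • vecMulVec w w)
  have h2 := rank_smul_le (tinner (vecMulVec w w) Z) (vecMulVec w w)
  have h3 := rank_vecMulVec_le w w
  rw [projPerp]
  omega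

variable {w}

lemma tinner_vecMulVec_projPerp (hw : ∑ i, w i ^ 2 = 1) (Z : Matrix (Fin d) (Fin d) ℝ) :
    tinner (vecMulVec w w) (projPerp w Z) = 0 := by
  rw [projPerp, tinner_sub_right, tinner_smul_right, tinner_self, frobNorm_vecMulVec_self hw]
  ring

lemma frobNorm_projPerp_le (hw : ∑ i, w i ^ 2 = 1) (Z : Matrix (Fin d) (Fin d) ℝ) :
    frobNorm (projPerp w Z) ≤ frobNorm Z := by
  have h := norm_add_sq_eq_norm_sq_add_norm_sq_real
    (x := frobFlat (projPerp w Z)) (y := frobFlat (tinner (vecMulVec w w) Z • vecMulVec w w))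
    (by rw [← tinner_eq_inner, tinner_comm, tinner_smul_left, tinner_vecMulVec_projPerp hw,
      mul_zero])
  rw [← map_add, projPerp_add_tinner_smul, ← frobNorm_eq_norm, ← frobNorm_eq_norm] at h
  exact (mul_self_le_mul_self_iff (frobNorm_nonneg _) (frobNorm_nonneg _)).mpr
    (h ▸ le_add_of_nonneg_right (mul_self_nonneg _))

end ProjPerp

section RIP

variable {d m : ℕ}

def HasRIP (𝒜 : Matrix (Fin d) (Fin d) ℝ →ₗ[ℝ] (Fin m → ℝ)) (k : ℕ) (δ : ℝ) : Prop :=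
  ∀ Z : Matrix (Fin d) (Fin d) ℝ, Z.IsSymm → Z.rank ≤ k →
    (1 - δ) * frobNorm Z ^ 2 ≤ ∑ i, 𝒜 Z i ^ 2 ∧ ∑ i, 𝒜 Z i ^ 2 ≤ (1 + δ) * frobNorm Z ^ 2

variable {𝒜 : Matrix (Fin d) (Fin d) ℝ →ₗ[ℝ] (Fin m → ℝ)} {k : ℕ} {δ : ℝ}

lemma HasRIP.abs_dotProduct_self_sub_le (h : HasRIP 𝒜 k δ) {Z : Matrix (Fin d) (Fin d) ℝ}
    (hZ : Z.IsSymm) (hZr : Z.rank ≤ k) : |𝒜 Z ⬝ᵥ 𝒜 Z - tinner Z Z| ≤ δ * tinner Z Z := by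
  obtain ⟨h₁, h₂⟩ := h Z hZ hZr
  rw [← sum_sq_eq_dotProduct_self, tinner_self, abs_le]
  constructor <;> linarith

lemma HasRIP.vecNorm_le (h : HasRIP 𝒜 k δ) {Z : Matrix (Fin d) (Fin d) ℝ} (hZ : Z.IsSymm)
    (hZr : Z.rank ≤ k) : vecNorm (𝒜 Z) ≤ √(1 + δ) * frobNorm Z :=
  calc vecNorm (𝒜 Z) ≤ √((1 + δ) * frobNorm Z ^ 2) := Real.sqrt_le_sqrt (h Z hZ hZr).2
    _ = √(1 + δ) * frobNorm Z := by
      rw [Real.sqrt_mul' _ (sq_nonneg _), Real.sqrt_sq (frobNorm_nonneg Z)]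

lemma HasRIP.abs_dotProduct_sub_tinner_le (h : HasRIP 𝒜 k δ) {X Y : Matrix (Fin d) (Fin d) ℝ}
    (hX : X.IsSymm) (hY : Y.IsSymm) (hXY : X.rank + Y.rank ≤ k) :
    |𝒜 X ⬝ᵥ 𝒜 Y - tinner X Y| ≤ δ * frobNorm X * frobNorm Y := by
  rcases (frobNorm_nonneg X).eq_or_lt with hX0 | hX0
  · rw [eq_comm, frobNorm_eq_zero] at hX0
    simp [hX0, tinner_eq_inner, frobNorm_eq_norm]
  rcases (frobNorm_nonneg Y).eq_or_lt with hY0 | hY0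
  · rw [eq_comm, frobNorm_eq_zero] at hY0
    simp [hY0, tinner_eq_inner, frobNorm_eq_norm]
  set a := frobNorm X
  set b := frobNorm Y
  -- polarization, comparing `b • X + a • Y` with `b • X - a • Y`
  have hrank (t : ℝ) : (b • X + t • Y).rank ≤ k :=
    (rank_add_le _ _).trans ((add_le_add (rank_smul_le _ _) (rank_smul_le _ _)).trans hXY)
  have hP := h.abs_dotProduct_self_sub_le ((hX.smul b).add (hY.smul a)) (hrank a)
  have hQ := h.abs_dotProduct_self_sub_le ((hX.smul b).add (hY.smul (-a))) (hrank (-a))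
  simp only [map_add, map_smul, add_dotProduct, dotProduct_add, smul_dotProduct, dotProduct_smul,
    smul_eq_mul, tinner_add_left, tinner_add_right, tinner_smul_left, tinner_smul_right,
    dotProduct_comm (𝒜 Y) (𝒜 X), tinner_comm Y X] at hP hQ
  rw [tinner_self X, tinner_self Y] at hP hQ
  rw [abs_le] at hP hQ ⊢
  have hab := mul_pos hX0 hY0
  constructor <;> nlinarith [hP.1, hP.2, hQ.1, hQ.2]

lemma HasRIP.abs_dotProduct_sub_tinner_le_two_mul (h : HasRIP 𝒜 k δ) (hδ : 0 ≤ δ)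
    {X G : Matrix (Fin d) (Fin d) ℝ} (hX : X.IsSymm) (hG : G.IsSymm) {l : ℕ}
    (hXl : X.rank + l ≤ k) (hGl : G.rank ≤ l + l) :
    |𝒜 X ⬝ᵥ 𝒜 G - tinner X G| ≤ 2 * δ * frobNorm X * frobNorm G := by
  obtain ⟨G₁, G₂, rfl, hG₁, hG₂, hr₁, hr₂, hf₁, hf₂⟩ := exists_eq_add_of_rank_le_add hG hGl
  have e₁ := h.abs_dotProduct_sub_tinner_le hX hG₁ (by omega)
  have e₂ := h.abs_dotProduct_sub_tinner_le hX hG₂ (by omega)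
  have hδX := mul_nonneg hδ (frobNorm_nonneg X)
  calc |𝒜 X ⬝ᵥ 𝒜 (G₁ + G₂) - tinner X (G₁ + G₂)|
      = |(𝒜 X ⬝ᵥ 𝒜 G₁ - tinner X G₁) + (𝒜 X ⬝ᵥ 𝒜 G₂ - tinner X G₂)| := by
        rw [map_add, dotProduct_add, tinner_add_right]
        ring_nf
    _ ≤ δ * frobNorm X * frobNorm G₁ + δ * frobNorm X * frobNorm G₂ :=
        (abs_add_le _ _).trans (add_le_add e₁ e₂)
    _ ≤ 2 * δ * frobNorm X * frobNorm (G₁ + G₂) := by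
        nlinarith [mul_le_mul_of_nonneg_left hf₁ hδX, mul_le_mul_of_nonneg_left hf₂ hδX]

lemma HasRIP.vecNorm_projPerp_le (h : HasRIP 𝒜 k δ) (hδ : δ ≤ 1) {w : Fin d → ℝ}
    (hw : ∑ i, w i ^ 2 = 1) {D : Matrix (Fin d) (Fin d) ℝ} (hD : D.IsSymm)
    (hDr : D.rank + 1 ≤ k) : vecNorm (𝒜 (projPerp w D)) ≤ √2 * frobNorm D :=
  calc vecNorm (𝒜 (projPerp w D)) ≤ √(1 + δ) * frobNorm (projPerp w D) :=
        h.vecNorm_le (hD.projPerp w) ((rank_projPerp_le w D).trans hDr)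
    _ ≤ √2 * frobNorm D := by
        gcongr
        · exact frobNorm_nonneg _
        · linarith
        · exact frobNorm_projPerp_le hw D

end RIP

section Adjoint

variable {d m : ℕ} {𝒜 : Matrix (Fin d) (Fin d) ℝ →ₗ[ℝ] (Fin m → ℝ)}
  {𝒜s : (Fin m → ℝ) →ₗ[ℝ] Matrix (Fin d) (Fin d) ℝ}

lemma tinner_adjoint_sub_left (hadj : ∀ y Z, Z.IsSymm → tinner (𝒜s y) Z = y ⬝ᵥ 𝒜 Z)
    (X : Matrix (Fin d) (Fin d) ℝ) {Y : Matrix (Fin d) (Fin d) ℝ} (hY : Y.IsSymm) :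
    tinner (𝒜s (𝒜 X) - X) Y = 𝒜 X ⬝ᵥ 𝒜 Y - tinner X Y := by
  rw [tinner_sub_left, hadj _ _ hY]

/-- Expand `Δ = P + G + ⟪W, Δ⟫ W` with `W = w wᵀ`, `P = projPerp w D`, `G = projPerp w (Δ - D)`,
using that `𝒜* 𝒜` is self-adjoint on symmetric matrices. -/
lemma tinner_vecMulVec_adjoint_sub_eq (hadj : ∀ y Z, Z.IsSymm → tinner (𝒜s y) Z = y ⬝ᵥ 𝒜 Z)
    {w : Fin d → ℝ} (hw : ∑ i, w i ^ 2 = 1) (Δ D : Matrix (Fin d) (Fin d) ℝ) :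
    tinner (vecMulVec w w) (𝒜s (𝒜 Δ) - Δ) =
      tinner (vecMulVec w w) (𝒜s (𝒜 (projPerp w D)))
        + (𝒜 (vecMulVec w w) ⬝ᵥ 𝒜 (projPerp w (Δ - D))
            - tinner (vecMulVec w w) (projPerp w (Δ - D)))
        + tinner (vecMulVec w w) Δ
            * (𝒜 (vecMulVec w w) ⬝ᵥ 𝒜 (vecMulVec w w)
                - tinner (vecMulVec w w) (vecMulVec w w)) := by
  have hW := isSymm_vecMulVec_self w
  have hsplit :
      Δ = projPerp w D + projPerp w (Δ - D) + tinner (vecMulVec w w) Δ • vecMulVec w w := by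
    rw [← projPerp_add, add_sub_cancel, projPerp_add_tinner_smul]
  have hP : tinner (vecMulVec w w) (𝒜s (𝒜 (projPerp w D)))
      = 𝒜 (projPerp w D) ⬝ᵥ 𝒜 (vecMulVec w w) := by
    rw [tinner_comm, hadj _ _ hW]
  rw [tinner_comm, tinner_adjoint_sub_left hadj _ hW, hP]
  conv_lhs => rw [hsplit]
  simp only [map_add, map_smul, add_dotProduct, smul_dotProduct, smul_eq_mul, tinner_add_left,
    tinner_smul_left]
  rw [tinner_comm (projPerp w D), tinner_vecMulVec_projPerp hw, tinner_comm (projPerp w (Δ - D)),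
    dotProduct_comm (𝒜 (projPerp w (Δ - D)))]
  ring

theorem abs_tinner_vecMulVec_adjoint_sub_le {r : ℕ} {δ c : ℝ} (hδ0 : 0 ≤ δ) (hδ1 : δ ≤ 1)
    (hRIP : HasRIP 𝒜 (2 * r + 2) δ) (hadj : ∀ y Z, Z.IsSymm → tinner (𝒜s y) Z = y ⬝ᵥ 𝒜 Z)
    {w : Fin d → ℝ} (hw : ∑ i, w i ^ 2 = 1) {Δ D : Matrix (Fin d) (Fin d) ℝ}
    (hΔ : Δ.IsSymm) (hΔr : Δ.rank ≤ 2 * r) (hD : D.IsSymm) (hDr : D.rank ≤ 2 * r) (hc : 0 ≤ c)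
    (hkey : |tinner (vecMulVec w w) (𝒜s (𝒜 (projPerp w D)))| ≤ c * vecNorm (𝒜 (projPerp w D))) :
    |tinner (vecMulVec w w) (𝒜s (𝒜 Δ) - Δ)| ≤
      c * (√2 * (frobNorm Δ + frobNorm (Δ - D))) + δ * specNorm Δ
        + 2 * δ * frobNorm (Δ - D) := by
  have hW := isSymm_vecMulVec_self w
  have hWf := frobNorm_vecMulVec_self hw
  have hP : |tinner (vecMulVec w w) (𝒜s (𝒜 (projPerp w D)))| ≤
      c * (√2 * (frobNorm Δ + frobNorm (Δ - D))) := by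
    refine hkey.trans (mul_le_mul_of_nonneg_left ?_ hc)
    refine (hRIP.vecNorm_projPerp_le hδ1 hw hD (by omega)).trans ?_
    gcongr
    simpa using frobNorm_sub_le Δ (Δ - D)
  have hG : |𝒜 (vecMulVec w w) ⬝ᵥ 𝒜 (projPerp w (Δ - D))
      - tinner (vecMulVec w w) (projPerp w (Δ - D))| ≤ 2 * δ * frobNorm (Δ - D) := by
    have h₁ := rank_vecMulVec_le w w
    have h₂ := rank_projPerp_le w (Δ - D)
    have h₃ := rank_sub_le Δ D
    refine (hRIP.abs_dotProduct_sub_tinner_le_two_mul hδ0 hW ((hΔ.sub hD).projPerp w)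
      (l := 2 * r + 1) (by omega) (by omega)).trans ?_
    rw [hWf, mul_one]
    exact mul_le_mul_of_nonneg_left (frobNorm_projPerp_le hw _) (by positivity)
  have hWW : |𝒜 (vecMulVec w w) ⬝ᵥ 𝒜 (vecMulVec w w) - tinner (vecMulVec w w) (vecMulVec w w)|
      ≤ δ := by
    simpa [hWf] using hRIP.abs_dotProduct_sub_tinner_le hW hW
      (by have := rank_vecMulVec_le w w; omega)
  have hΔW := abs_tinner_vecMulVec_le_specNorm hΔ hw
  rw [tinner_vecMulVec_adjoint_sub_eq hadj hw Δ D]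
  refine (abs_add_three _ _ _).trans ?_
  rw [abs_mul]
  nlinarith [mul_le_mul hΔW hWW (abs_nonneg _) (specNorm_nonneg Δ)]

end Adjoint

theorem statement12 {d m r : ℕ} (δ : ℝ) (hδ0 : 0 ≤ δ) (hδ1 : δ ≤ 1)
    (𝒜 : Matrix (Fin d) (Fin d) ℝ →ₗ[ℝ] (Fin m → ℝ))
    (𝒜s : (Fin m → ℝ) →ₗ[ℝ] Matrix (Fin d) (Fin d) ℝ)
    (hsym : ∀ y, (𝒜s y).IsSymm)
    (hadj : ∀ (y : Fin m → ℝ) (Z : Matrix (Fin d) (Fin d) ℝ), Z.IsSymm →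
      tinner (𝒜s y) Z = ∑ i, y i * 𝒜 Z i)
    (hRIP : ∀ Z : Matrix (Fin d) (Fin d) ℝ, Z.IsSymm → Z.rank ≤ 2 * r + 2 →
      (1 - δ) * frobNorm Z ^ 2 ≤ ∑ i, 𝒜 Z i ^ 2 ∧
        ∑ i, 𝒜 Z i ^ 2 ≤ (1 + δ) * frobNorm Z ^ 2)
    (Net : Finset (Fin d → ℝ)) (hne : Net.Nonempty)
    (hunit : ∀ w ∈ Net, ∑ i, w i ^ 2 = 1)
    (hnet : ∀ x : Fin d → ℝ, ∑ i, x i ^ 2 = 1 → ∃ w ∈ Net, vecNorm (x - w) ≤ 1 / 2)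
    (Δt : Matrix (Fin d) (Fin d) ℝ) (hΔts : Δt.IsSymm) (hΔtr : Δt.rank ≤ 2 * r)
    (Δw : (Fin d → ℝ) → Matrix (Fin d) (Fin d) ℝ)
    (hΔw : ∀ w ∈ Net, (Δw w).IsSymm ∧ (Δw w).rank ≤ 2 * r)
    (hkey : ∀ w ∈ Net,
      |tinner (Matrix.vecMulVec w w) (𝒜s (𝒜 (projPerp w (Δw w))))|
        ≤ 4 * Real.sqrt ((d : ℝ) / m) * vecNorm (𝒜 (projPerp w (Δw w)))) :
    specNorm (𝒜s (𝒜 Δt) - Δt)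
      ≤ (16 * Real.sqrt (2 * (r : ℝ) * d / m) + 2 * δ) * specNorm Δt
        + 4 * (δ + 4 * Real.sqrt ((d : ℝ) / m))
            * Net.sup' hne (fun w => frobNorm (Δt - Δw w)) := by
  replace hRIP : HasRIP 𝒜 (2 * r + 2) δ := hRIP
  set s := Net.sup' hne fun w => frobNorm (Δt - Δw w)
  have hsw (w) (hw : w ∈ Net) : frobNorm (Δt - Δw w) ≤ s :=
    Finset.le_sup' (fun w => frobNorm (Δt - Δw w)) hw
  have hs : 0 ≤ s := (frobNorm_nonneg _).trans (hsw _ hne.choose_spec)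
  have hΔF : frobNorm Δt ≤ √(2 * r) * specNorm Δt := by
    exact_mod_cast frobNorm_le_sqrt_mul_specNorm hΔts hΔtr
  have hbound (w) (hw : w ∈ Net) : |tinner (vecMulVec w w) (𝒜s (𝒜 Δt) - Δt)| ≤
      4 * √((d : ℝ) / m) * (2 * (√(2 * r) * specNorm Δt + s)) + δ * specNorm Δt + 2 * δ * s := by
    refine (abs_tinner_vecMulVec_adjoint_sub_le hδ0 hδ1 hRIP hadj (hunit w hw) hΔts hΔtr
      (hΔw w hw).1 (hΔw w hw).2 (by positivity) (hkey w hw)).trans ?_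
    have h2 : √2 ≤ 2 := by rw [Real.sqrt_le_left zero_le_two]; norm_num
    gcongr
    · exact add_nonneg (frobNorm_nonneg _) (frobNorm_nonneg _)
    all_goals exact hsw w hw
  refine (specNorm_le_two_mul_of_net ((hsym _).sub hΔts) hunit hnet
    (by have := specNorm_nonneg Δt; positivity) hbound).trans_eq ?_
  rw [mul_div_assoc, Real.sqrt_mul (by positivity) ((d : ℝ) / m)]
  ring
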